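/- Let Γ be a locally compact Hausdorff topological space, let φ be a flow on Γ, let S ⊆ Γ be an isolated invariant set of φ, and let (A,R) be an attractor-repeller pair in S. Then there exists an index triple (L,M,N) for (A,R): compact sets N ⊆ M ⊆ L such that (L,M) is an index pair for R, (L,N) is an index pair for S, and (M,N) is an index pair for A. -/

import Mathlib

/-!
Choose `T ≥ 0` such that every point whose orbit stays in the isolating neighbourhood `U` over
`[-T, T]` lies in the interior of `U`. Let `L` be the set of points that stayed in `U` during the
last `T` units of time, and `N` the closure of the set of points of `L` whose orbit leaves
`interior U` while running through the points reached from the frontier of `U` within time `T`.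
Then `(L, N)` is an index pair for `S`: the points reached from the frontier of `U` within time
`T` form a compact set missing `S`, which keeps `N` away from `S`; and an orbit segment in `L`
which touches the frontier of `U` leaves `U` within time `T` afterwards, so it ends in `N`.

For the attractor-repeller pair take `M = closure (N ∪ D)`, where `D` is the forward flow within
`L` of a neighbourhood `P` of `A`. The heart of the proof is that `P` can be chosen with
`closure D` disjoint from `R`. Otherwise, fix a compact neighbourhood `V` of `A` missing `R`;
the last visits to `V` of orbits coming close to `R` accumulate, by compactness, at a point of `V`
whose forward orbit stays in `L` and never returns to `interior V`. If its backward orbit stays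
in `L` as well, the point lies in `S` and its ω-limit misses `A`, so it lies in `A* = R`, which is
impossible; if its backward orbit leaves `L`, a smaller `P` keeps it away from `closure D`.
Since `M` is positively invariant relative to `L`, contains a neighbourhood of `A` and misses
`R`, the identities `A = R*` and `R = A*` give the isolation of `(M, N)` and `(L, M)`.
-/

open Set

/-- A (continuous) flow on a topological space `Γ`. -/
def IsFlow {Γ : Type*} [TopologicalSpace Γ] (φ : Γ × ℝ → Γ) : Prop :=
  Continuous φ ∧ (∀ x, φ (x, 0) = x) ∧ ∀ (x : Γ) (s t : ℝ), φ (φ (x, s), t) = φ (x, s + t)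

/-- The maximal invariant subset of `U`. -/
def maxInv {Γ : Type*} (φ : Γ × ℝ → Γ) (U : Set Γ) : Set Γ :=
  {u | u ∈ U ∧ ∀ t : ℝ, φ (u, t) ∈ U}

/-- `U` is a compact (isolating) neighbourhood of `S` with `Inv U = S`. -/
def IsIsolatingNbhd {Γ : Type*} [TopologicalSpace Γ] (φ : Γ × ℝ → Γ) (U S : Set Γ) : Prop :=
  IsCompact U ∧ U ∈ nhdsSet S ∧ maxInv φ U = S

/-- `S` is an isolated invariant set of the flow `φ`. -/
def IsIsolatedInvariantSet {Γ : Type*} [TopologicalSpace Γ] (φ : Γ × ℝ → Γ) (S : Set Γ) : Prop :=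
  IsCompact S ∧ ∃ U : Set Γ, IsIsolatingNbhd φ U S

/-- `(M, N)` is an index pair for the isolated invariant set `S`. -/
def IsIndexPair {Γ : Type*} [TopologicalSpace Γ] (φ : Γ × ℝ → Γ) (S M N : Set Γ) : Prop :=
  IsCompact M ∧ IsCompact N ∧ N ⊆ M ∧
  IsIsolatingNbhd φ (closure (M \ N)) S ∧
  (∀ x ∈ N, ∀ t : ℝ, 0 ≤ t →
    (∀ s ∈ Icc (0 : ℝ) t, φ (x, s) ∈ M) → ∀ s ∈ Icc (0 : ℝ) t, φ (x, s) ∈ N) ∧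
  (∀ x ∈ M, ∀ t : ℝ, 0 ≤ t → φ (x, t) ∉ M → ∃ s ∈ Icc (0 : ℝ) t, φ (x, s) ∈ N)

/-- The ω-limit `ω(T)`: the maximal invariant set of the closure of the forward orbit of `T`. -/
def omegaSet {Γ : Type*} [TopologicalSpace Γ] (φ : Γ × ℝ → Γ) (T : Set Γ) : Set Γ :=
  maxInv φ (closure (φ '' (T ×ˢ Ici (0 : ℝ))))

/-- The ω*-limit `ω*(T)`: the maximal invariant set of the closure of the backward orbit of `T`. -/
def omegaStarSet {Γ : Type*} [TopologicalSpace Γ] (φ : Γ × ℝ → Γ) (T : Set Γ) : Set Γ :=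
  maxInv φ (closure (φ '' (T ×ˢ Iic (0 : ℝ))))

/-- `A` is an attractor in the isolated invariant set `S`: there is a neighbourhood `U` of `A`
in the subspace `S` with `A = ω(U)`. -/
def IsAttractorIn {Γ : Type*} [TopologicalSpace Γ] (φ : Γ × ℝ → Γ) (S A : Set Γ) : Prop :=
  A ⊆ S ∧ ∃ U : Set Γ, U ⊆ S ∧ (∃ V : Set Γ, IsOpen V ∧ A ⊆ V ∧ V ∩ S ⊆ U) ∧ omegaSet φ U = A

/-- `R` is a repeller in the isolated invariant set `S`: there is a neighbourhood `U` of `R`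
in the subspace `S` with `R = ω*(U)`. -/
def IsRepellerIn {Γ : Type*} [TopologicalSpace Γ] (φ : Γ × ℝ → Γ) (S R : Set Γ) : Prop :=
  R ⊆ S ∧ ∃ U : Set Γ, U ⊆ S ∧ (∃ V : Set Γ, IsOpen V ∧ R ⊆ V ∧ V ∩ S ⊆ U) ∧ omegaStarSet φ U = R

/-- The complementary repeller `A* = {x ∈ S | ω({x}) ∩ A = ∅}` of an attractor `A ⊆ S`. -/
def compRepeller {Γ : Type*} [TopologicalSpace Γ] (φ : Γ × ℝ → Γ) (S A : Set Γ) : Set Γ :=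
  {x ∈ S | omegaSet φ {x} ∩ A = ∅}

/-- The complementary attractor `R* = {x ∈ S | ω*({x}) ∩ R = ∅}` of a repeller `R ⊆ S`. -/
def compAttractor {Γ : Type*} [TopologicalSpace Γ] (φ : Γ × ℝ → Γ) (S R : Set Γ) : Set Γ :=
  {x ∈ S | omegaStarSet φ {x} ∩ R = ∅}

/-- `(A, R)` is an attractor-repeller pair in `S`. -/
def IsAttractorRepellerPair {Γ : Type*} [TopologicalSpace Γ] (φ : Γ × ℝ → Γ)
    (S A R : Set Γ) : Prop :=
  IsAttractorIn φ S A ∧ IsRepellerIn φ S R ∧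
    A = compAttractor φ S R ∧ R = compRepeller φ S A

open Filter Topology

section Invariance

variable {Γ : Type*} {φ : Γ × ℝ → Γ}

theorem maxInv_subset (U : Set Γ) : maxInv φ U ⊆ U := fun _ hx => hx.1

theorem maxInv_mono {U V : Set Γ} (h : U ⊆ V) : maxInv φ U ⊆ maxInv φ V :=
  fun _ hx => ⟨h hx.1, fun t => h (hx.2 t)⟩

theorem IsInvariant.subset_maxInv {A U : Set Γ} (hA : IsInvariant (fun t x => φ (x, t)) A)
    (hAU : A ⊆ U) : A ⊆ maxInv φ U :=
  fun _ hx => ⟨hAU hx, fun t => hAU (hA t hx)⟩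

end Invariance

namespace IsFlow

variable {Γ : Type*} [TopologicalSpace Γ] {φ : Γ × ℝ → Γ}

theorem continuous_fixed_time (hφ : IsFlow φ) (t : ℝ) : Continuous fun x => φ (x, t) :=
  hφ.1.comp (continuous_id.prodMk continuous_const)

theorem continuous_orbit (hφ : IsFlow φ) (x : Γ) : Continuous fun t => φ (x, t) :=
  hφ.1.comp (continuous_const.prodMk continuous_id)

theorem map_zero (hφ : IsFlow φ) (x : Γ) : φ (x, 0) = x := hφ.2.1 x

theorem map_map (hφ : IsFlow φ) (x : Γ) (s t : ℝ) : φ (φ (x, s), t) = φ (x, s + t) :=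
  hφ.2.2 x s t

theorem map_map_neg (hφ : IsFlow φ) (x : Γ) (t : ℝ) : φ (φ (x, t), -t) = x := by
  rw [hφ.map_map, add_neg_cancel, hφ.map_zero]

def toFlow (hφ : IsFlow φ) : Flow ℝ Γ where
  toFun t x := φ (x, t)
  cont' := hφ.1.comp continuous_swap
  map_add' t s x := by simp only [hφ.map_map, add_comm]
  map_zero' := hφ.map_zero

theorem isClosed_setOf_forall_mem (hφ : IsFlow φ) {U : Set Γ} (hU : IsClosed U) (I : Set ℝ) :
    IsClosed {x | ∀ t ∈ I, φ (x, t) ∈ U} := by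
  simp only [ofPred_forall]
  exact isClosed_biInter fun t _ => hU.preimage (hφ.continuous_fixed_time t)

theorem eventually_nhdsSet_forall_mem (hφ : IsFlow φ) {C : Set Γ} {K : Set ℝ} {O : Set Γ}
    (hC : IsCompact C) (hK : IsCompact K) (hO : IsOpen O) (h : ∀ x ∈ C, ∀ t ∈ K, φ (x, t) ∈ O) :
    ∀ᶠ y in 𝓝ˢ C, ∀ t ∈ K, φ (y, t) ∈ O := by
  have : φ ⁻¹' O ∈ 𝓝ˢ C ×ˢ 𝓝ˢ K := by
    rw [← hC.nhdsSet_prod_eq hK]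
    exact (hO.preimage hφ.1).mem_nhdsSet.2 fun p hp => h p.1 hp.1 p.2 hp.2
  obtain ⟨_, hpa, _, hpb, hab⟩ := Filter.eventually_prod_iff.1 this
  exact hpa.mono fun y hy t ht => hab hy (hpb.self_of_nhdsSet t ht)

theorem eventually_nhds_forall_mem (hφ : IsFlow φ) {x : Γ} {K : Set ℝ} {O : Set Γ}
    (hK : IsCompact K) (hO : IsOpen O) (h : ∀ t ∈ K, φ (x, t) ∈ O) :
    ∀ᶠ y in 𝓝 x, ∀ t ∈ K, φ (y, t) ∈ O := by
  simpa using hφ.eventually_nhdsSet_forall_mem isCompact_singleton hK hO (by simpa using h)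

theorem isInvariant_maxInv (hφ : IsFlow φ) (U : Set Γ) :
    IsInvariant (fun t x => φ (x, t)) (maxInv φ U) :=
  fun t _ hx => ⟨hx.2 t, fun s => by simpa only [hφ.map_map] using hx.2 (t + s)⟩

theorem isClosed_maxInv (hφ : IsFlow φ) {U : Set Γ} (hU : IsClosed U) : IsClosed (maxInv φ U) := by
  have : maxInv φ U = U ∩ {x | ∀ t ∈ univ, φ (x, t) ∈ U} := by ext; simp [maxInv]
  exact this ▸ hU.inter (hφ.isClosed_setOf_forall_mem hU univ)

end IsFlow

section OmegaLimits

variable {Γ : Type*} [TopologicalSpace Γ] {φ : Γ × ℝ → Γ} {x : Γ} {C : Set Γ}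

theorem omegaSet_subset_of_forall_mem (hC : IsClosed C) (h : ∀ t, 0 ≤ t → φ (x, t) ∈ C) :
    omegaSet φ {x} ⊆ C := by
  refine fun _ hy => closure_minimal ?_ hC hy.1
  rintro _ ⟨⟨y, t⟩, ⟨rfl, ht⟩, rfl⟩
  exact h t ht

theorem omegaStarSet_subset_of_forall_mem (hC : IsClosed C) (h : ∀ t, t ≤ 0 → φ (x, t) ∈ C) :
    omegaStarSet φ {x} ⊆ C := by
  refine fun _ hy => closure_minimal ?_ hC hy.1
  rintro _ ⟨⟨y, t⟩, ⟨rfl, ht⟩, rfl⟩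
  exact h t ht

theorem IsFlow.omegaSet_inter_nonempty [T2Space Γ] (hφ : IsFlow φ) (hC : IsCompact C)
    (h : ∀ t, 0 ≤ t → φ (x, t) ∈ C) : (omegaSet φ {x} ∩ C).Nonempty := by
  have horbit : image2 hφ.toFlow (Ici 0) {x} = φ '' ({x} ×ˢ Ici 0) := by
    ext; simp [IsFlow.toFlow, and_comm, eq_comm]
  have hlim : omegaLimit atTop hφ.toFlow {x} ⊆ closure (φ '' ({x} ×ˢ Ici 0)) :=
    horbit ▸ omegaLimit_subset_closure_image2 _ _ _ (Ici_mem_atTop 0)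
  have hC' : closure (φ '' ({x} ×ˢ Ici 0)) ⊆ C :=
    closure_minimal (fun _ ⟨⟨_, t⟩, ⟨rfl, ht⟩, hy⟩ => hy ▸ h t ht) hC.isClosed
  obtain ⟨w, hw⟩ := nonempty_omegaLimit_of_isCompact_absorbing atTop hφ.toFlow {x} hC
    ⟨Ici 0, Ici_mem_atTop 0, horbit ▸ hC'⟩ (singleton_nonempty x)
  have hinv := Flow.isInvariant_omegaLimit atTop hφ.toFlow {x} fun t =>
    tendsto_atTop_add_const_left _ t tendsto_id
  exact ⟨w, ⟨hlim hw, fun t => hlim (hinv t hw)⟩, hC' (hlim hw)⟩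

end OmegaLimits

section AttractorRepeller

variable {Γ : Type*} [TopologicalSpace Γ] {φ : Γ × ℝ → Γ} {S A R : Set Γ}

theorem IsAttractorIn.isInvariant (hφ : IsFlow φ) (h : IsAttractorIn φ S A) :
    IsInvariant (fun t x => φ (x, t)) A := by
  obtain ⟨-, U, -, -, rfl⟩ := h
  exact hφ.isInvariant_maxInv _

theorem IsAttractorIn.isCompact (hφ : IsFlow φ) (hS : IsCompact S) (h : IsAttractorIn φ S A) :
    IsCompact A := by
  obtain ⟨hAS, U, -, -, rfl⟩ := h
  exact hS.of_isClosed_subset (hφ.isClosed_maxInv isClosed_closure) hAS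

theorem IsRepellerIn.isInvariant (hφ : IsFlow φ) (h : IsRepellerIn φ S R) :
    IsInvariant (fun t x => φ (x, t)) R := by
  obtain ⟨-, U, -, -, rfl⟩ := h
  exact hφ.isInvariant_maxInv _

theorem IsRepellerIn.isCompact (hφ : IsFlow φ) (hS : IsCompact S) (h : IsRepellerIn φ S R) :
    IsCompact R := by
  obtain ⟨hRS, U, -, -, rfl⟩ := h
  exact hS.of_isClosed_subset (hφ.isClosed_maxInv isClosed_closure) hRS

theorem IsAttractorRepellerPair.disjoint [T2Space Γ] (hφ : IsFlow φ) (hS : IsCompact S)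
    (h : IsAttractorRepellerPair φ S A R) : Disjoint A R := by
  obtain ⟨hA, -, -, rfl⟩ := h
  refine disjoint_left.2 fun x hxA hxR => ?_
  obtain ⟨y, hy⟩ := hφ.omegaSet_inter_nonempty (hA.isCompact hφ hS) fun t _ =>
    hA.isInvariant hφ t hxA
  exact hxR.2.subset hy

end AttractorRepeller

section RelativeInvariance

variable {Γ : Type*} {φ : Γ × ℝ → Γ}

/-- Condition (ii) of an index pair, stated for the endpoint of the orbit segment only. -/
def IsPosInvariantRel (φ : Γ × ℝ → Γ) (N M : Set Γ) : Prop :=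
  ∀ x ∈ N, ∀ t : ℝ, 0 ≤ t → (∀ s ∈ Icc (0 : ℝ) t, φ (x, s) ∈ M) → φ (x, t) ∈ N

/-- Condition (iii) of an index pair. -/
def IsExitSet (φ : Γ × ℝ → Γ) (N M : Set Γ) : Prop :=
  ∀ x ∈ M, ∀ t : ℝ, 0 ≤ t → φ (x, t) ∉ M → ∃ s ∈ Icc (0 : ℝ) t, φ (x, s) ∈ N

theorem IsPosInvariantRel.mono_right {N M M' : Set Γ} (h : IsPosInvariantRel φ N M)
    (hM : M' ⊆ M) : IsPosInvariantRel φ N M' :=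
  fun x hx t ht hpath => h x hx t ht fun s hs => hM (hpath s hs)

theorem IsPosInvariantRel.union {N N' M : Set Γ} (h : IsPosInvariantRel φ N M)
    (h' : IsPosInvariantRel φ N' M) : IsPosInvariantRel φ (N ∪ N') M := by
  rintro x (hx | hx) t ht hpath
  exacts [Or.inl (h x hx t ht hpath), Or.inr (h' x hx t ht hpath)]

theorem IsPosInvariantRel.forall_mem_Icc {N M : Set Γ} (h : IsPosInvariantRel φ N M)
    {x : Γ} (hx : x ∈ N) {t : ℝ} (hpath : ∀ s ∈ Icc (0 : ℝ) t, φ (x, s) ∈ M) :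
    ∀ s ∈ Icc (0 : ℝ) t, φ (x, s) ∈ N :=
  fun s hs => h x hx s hs.1 fun r hr => hpath r ⟨hr.1, hr.2.trans hs.2⟩

theorem IsPosInvariantRel.trans {D L U : Set Γ} (hD : IsPosInvariantRel φ D L) (hDL : D ⊆ L)
    (hL : IsPosInvariantRel φ L U) : IsPosInvariantRel φ D U :=
  fun x hx _ ht hpath => hD x hx _ ht (hL.forall_mem_Icc (hDL hx) hpath)

theorem IsExitSet.mono_left {N N' M : Set Γ} (h : IsExitSet φ N M) (hN : N ⊆ N') :
    IsExitSet φ N' M :=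
  fun x hx t ht hout => (h x hx t ht hout).imp fun _ ⟨hs, hsN⟩ => ⟨hs, hN hsN⟩

theorem IsExitSet.of_isPosInvariantRel {N M L : Set Γ} (hN : IsExitSet φ N L)
    (hM : IsPosInvariantRel φ M L) (hML : M ⊆ L) : IsExitSet φ N M := by
  intro x hx t ht hout
  obtain ⟨q, hq, hqL⟩ : ∃ q ∈ Icc (0 : ℝ) t, φ (x, q) ∉ L := by
    by_contra! hin
    exact hout (hM x hx t ht hin)
  obtain ⟨s, hs, hsN⟩ := hN x (hML hx) q hq.1 hqL
  exact ⟨s, ⟨hs.1, hs.2.trans hq.2⟩, hsN⟩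

variable [TopologicalSpace Γ]

theorem IsPosInvariantRel.closure (hφ : IsFlow φ) {D W : Set Γ} (hW : IsOpen W)
    (h : IsPosInvariantRel φ D W) : IsPosInvariantRel φ (closure D) W := by
  intro x hx t ht hpath
  have : (𝓝[D] x).NeBot := mem_closure_iff_nhdsWithin_neBot.1 hx
  have hnear : ∀ᶠ y in 𝓝[D] x, φ (y, t) ∈ D :=
    (eventually_nhdsWithin_of_eventually_nhds
      (hφ.eventually_nhds_forall_mem isCompact_Icc hW hpath)).and self_mem_nhdsWithin
      |>.mono fun y ⟨hy, hyD⟩ => h y hyD t ht hy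
  exact mem_closure_of_tendsto
    ((hφ.continuous_fixed_time t).tendsto x |>.mono_left nhdsWithin_le_nhds) hnear

theorem IsIndexPair.of_isPosInvariantRel {S M N : Set Γ} (hM : IsCompact M) (hN : IsCompact N)
    (hNM : N ⊆ M) (hiso : IsIsolatingNbhd φ (closure (M \ N)) S)
    (hpos : IsPosInvariantRel φ N M) (hexit : IsExitSet φ N M) : IsIndexPair φ S M N :=
  ⟨hM, hN, hNM, hiso, fun _ hx _ _ hpath => hpos.forall_mem_Icc hx hpath, hexit⟩

theorem IsIndexPair.isPosInvariantRel {S M N : Set Γ} (h : IsIndexPair φ S M N) :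
    IsPosInvariantRel φ N M :=
  fun x hx t ht hpath => h.2.2.2.2.1 x hx t ht hpath t ⟨ht, le_rfl⟩

theorem IsIndexPair.subset_interior [T2Space Γ] {S M N : Set Γ} (h : IsIndexPair φ S M N) :
    S ⊆ interior M :=
  (subset_interior_iff_mem_nhdsSet.2 h.2.2.2.1.2.1).trans
    (interior_mono (closure_minimal sdiff_subset h.1.isClosed))

end RelativeInvariance

section IntermediateSet

variable {Γ : Type*} [TopologicalSpace Γ] [T2Space Γ] {φ : Γ × ℝ → Γ} {S A R L M N : Set Γ}

theorem IsIndexPair.isIndexPair_repeller (hLN : IsIndexPair φ S L N) (hM : IsCompact M)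
    (hNM : N ⊆ M) (hML : M ⊆ L) (hMpos : IsPosInvariantRel φ M L)
    (hRinv : IsInvariant (fun t x => φ (x, t)) R) (hRS : R ⊆ S) (hRM : Disjoint R M)
    (hAM : A ⊆ interior M) (hR : compRepeller φ S A ⊆ R) : IsIndexPair φ R L M := by
  have hSL := hLN.subset_interior
  obtain ⟨hL, -, -, ⟨-, -, hLNS⟩, -, hexit⟩ := hLN
  have hcl : closure (L \ M) ⊆ L := closure_minimal sdiff_subset hL.isClosed
  have hRLM : R ⊆ interior L ∩ Mᶜ := fun x hx => ⟨hSL (hRS hx), hRM.notMem_of_mem_left hx⟩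
  refine .of_isPosInvariantRel hL hM hML ⟨hL.of_isClosed_subset isClosed_closure hcl, ?_, ?_⟩
    hMpos (IsExitSet.mono_left hexit hNM)
  · refine mem_nhdsSet_iff_exists.2 ⟨_, isOpen_interior.inter hM.isClosed.isOpen_compl, hRLM, ?_⟩
    exact fun x hx => subset_closure ⟨interior_subset hx.1, hx.2⟩
  · refine (hRinv.subset_maxInv fun x hx => subset_closure ?_).antisymm' fun x hx => hR ⟨?_, ?_⟩
    · exact ⟨interior_subset (hRLM hx).1, (hRLM hx).2⟩
    · exact hLNS ▸ maxInv_mono (closure_mono (sdiff_subset_sdiff_right hNM)) hx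
    · have : omegaSet φ {x} ⊆ (interior M)ᶜ := omegaSet_subset_of_forall_mem
        isOpen_interior.isClosed_compl fun t _ => ?_
      · exact subset_empty_iff.1 fun y hy => this hy.1 (hAM hy.2)
      rw [← closure_compl]
      exact closure_mono (fun _ hy => hy.2) (hx.2 t)

theorem IsIndexPair.isIndexPair_attractor (hLN : IsIndexPair φ S L N) (hM : IsCompact M)
    (hNM : N ⊆ M) (hML : M ⊆ L) (hMpos : IsPosInvariantRel φ M L)
    (hAinv : IsInvariant (fun t x => φ (x, t)) A) (hAM : A ⊆ interior M) (hAN : Disjoint A N)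
    (hRM : Disjoint R M) (hA : compAttractor φ S R ⊆ A) : IsIndexPair φ A M N := by
  have hNpos := hLN.isPosInvariantRel
  obtain ⟨-, hN, -, ⟨-, -, hLNS⟩, -, hexit⟩ := hLN
  have hcl : closure (M \ N) ⊆ M := closure_minimal sdiff_subset hM.isClosed
  have hAMN : A ⊆ interior M ∩ Nᶜ := fun x hx => ⟨hAM hx, hAN.notMem_of_mem_left hx⟩
  refine .of_isPosInvariantRel hM hN hNM ⟨hM.of_isClosed_subset isClosed_closure hcl, ?_, ?_⟩
    (hNpos.mono_right hML) (IsExitSet.of_isPosInvariantRel hexit hMpos hML)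
  · refine mem_nhdsSet_iff_exists.2 ⟨_, isOpen_interior.inter hN.isClosed.isOpen_compl, hAMN, ?_⟩
    exact fun x hx => subset_closure ⟨interior_subset hx.1, hx.2⟩
  · refine (hAinv.subset_maxInv fun x hx => subset_closure ?_).antisymm' fun x hx => hA ⟨?_, ?_⟩
    · exact ⟨interior_subset (hAMN hx).1, (hAMN hx).2⟩
    · exact hLNS ▸ maxInv_mono (closure_mono (sdiff_subset_sdiff_left hML)) hx
    · have : omegaStarSet φ {x} ⊆ M :=
        omegaStarSet_subset_of_forall_mem hM.isClosed fun t _ => hcl (hx.2 t)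
      exact subset_empty_iff.1 fun y hy => hRM.notMem_of_mem_right (this hy.1) hy.2

end IntermediateSet

section Paths

variable {Γ : Type*} [TopologicalSpace Γ] {γ : ℝ → Γ} {C : Set Γ} {a b : ℝ}

theorem Continuous.exists_last_mem (hγ : Continuous γ) (hC : IsClosed C) (hab : a ≤ b)
    (ha : γ a ∈ C) : ∃ σ ∈ Icc a b, γ σ ∈ C ∧ ∀ s ∈ Ioc σ b, γ s ∉ C := by
  let Z := Icc a b ∩ γ ⁻¹' C
  have hZ : IsClosed Z := isClosed_Icc.inter (hC.preimage hγ)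
  have hbdd : BddAbove Z := bddAbove_Icc.mono inter_subset_left
  obtain ⟨hσ, hσC⟩ := hZ.csSup_mem ⟨a, ⟨le_rfl, hab⟩, ha⟩ hbdd
  exact ⟨sSup Z, hσ, hσC, fun s hs hsC =>
    (le_csSup hbdd ⟨⟨hσ.1.trans hs.1.le, hs.2⟩, hsC⟩).not_gt hs.1⟩

theorem Continuous.exists_first_notMem_interior (hγ : Continuous γ) (hC : IsClosed C)
    (hab : a ≤ b) (ha : γ a ∈ C) (hb : γ b ∉ interior C) :
    ∃ σ ∈ Icc a b, (∀ s ∈ Icc a σ, γ s ∈ C) ∧ γ σ ∉ interior C := by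
  let Z := Icc a b ∩ γ ⁻¹' (interior C)ᶜ
  have hZ : IsClosed Z := isClosed_Icc.inter (isOpen_interior.isClosed_compl.preimage hγ)
  have hbdd : BddBelow Z := bddBelow_Icc.mono inter_subset_left
  obtain ⟨hσ, hσC⟩ := hZ.csInf_mem ⟨b, ⟨hab, le_rfl⟩, hb⟩ hbdd
  have hbefore : Ico a (sInf Z) ⊆ γ ⁻¹' C := fun s hs =>
    interior_subset (s := C) <| by_contra fun h =>
      (csInf_le hbdd ⟨⟨hs.1, hs.2.le.trans hσ.2⟩, h⟩).not_gt hs.2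
  refine ⟨sInf Z, hσ, fun s hs => ?_, hσC⟩
  rcases hσ.1.eq_or_lt with h | h
  · exact (le_antisymm (h ▸ hs.2) hs.1) ▸ ha
  · exact closure_minimal hbefore (hC.preimage hγ) (closure_Ico h.ne ▸ hs)

end Paths

section IndexPairConstruction

variable {Γ : Type*} [TopologicalSpace Γ] {φ : Γ × ℝ → Γ} {U S : Set Γ} {T : ℝ}

theorem IsFlow.exists_forall_Icc_mem_imp_mem [T2Space Γ] (hφ : IsFlow φ) {W : Set Γ}
    (hU : IsCompact U) (hW : IsOpen W) (hUW : maxInv φ U ⊆ W) :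
    ∃ T : ℝ, 0 ≤ T ∧ ∀ x, (∀ t ∈ Icc (-T) T, φ (x, t) ∈ U) → x ∈ W := by
  by_contra! h
  let B : ℕ → Set Γ := fun n => {x | ∀ t ∈ Icc (-(n : ℝ)) n, φ (x, t) ∈ U} ∩ Wᶜ
  have hBclosed (n : ℕ) : IsClosed (B n) :=
    (hφ.isClosed_setOf_forall_mem hU.isClosed _).inter hW.isClosed_compl
  have hB0 : B 0 ⊆ U := fun x hx => by simpa [hφ.map_zero] using hx.1 0
  obtain ⟨x, hx⟩ := IsCompact.nonempty_iInter_of_sequence_nonempty_isCompact_isClosed B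
    (fun n y hy => ⟨fun t ht => hy.1 t ⟨by push_cast at ht ⊢; linarith [ht.1], by
      push_cast at ht ⊢; linarith [ht.2]⟩, hy.2⟩)
    (fun n => h n n.cast_nonneg) (hU.of_isClosed_subset (hBclosed 0) hB0) hBclosed
  rw [mem_iInter] at hx
  refine (hx 0).2 (hUW ⟨hB0 (hx 0), fun t => ?_⟩)
  obtain ⟨n, hn⟩ := exists_nat_ge |t|
  exact (hx n).1 t (abs_le.1 hn)

def stayedIn (φ : Γ × ℝ → Γ) (U : Set Γ) (T : ℝ) : Set Γ :=
  {x | ∀ t ∈ Icc (-T) 0, φ (x, t) ∈ U}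

def frontierFlowOut (φ : Γ × ℝ → Γ) (U : Set Γ) (T : ℝ) : Set Γ :=
  φ '' (frontier U ×ˢ Icc 0 T)

def exitRegion (φ : Γ × ℝ → Γ) (U : Set Γ) (T : ℝ) : Set Γ :=
  {y ∈ stayedIn φ U T | ∃ s, 0 ≤ s ∧ (∀ h ∈ Icc (0 : ℝ) s, φ (y, h) ∈ frontierFlowOut φ U T) ∧
    φ (y, s) ∉ interior U}

theorem stayedIn_subset (hφ : IsFlow φ) (hT : 0 ≤ T) : stayedIn φ U T ⊆ U :=
  fun x hx => hφ.map_zero x ▸ hx 0 ⟨by linarith, le_rfl⟩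

theorem subset_interior_stayedIn (hφ : IsFlow φ) (hS : IsCompact S)
    (hSinv : IsInvariant (fun t x => φ (x, t)) S) (hSU : S ⊆ interior U) :
    S ⊆ interior (stayedIn φ U T) := by
  refine subset_interior_iff_mem_nhdsSet.2 ?_
  filter_upwards [hφ.eventually_nhdsSet_forall_mem hS isCompact_Icc isOpen_interior
    fun x hx t _ => hSU (hSinv t hx)] with y hy t ht using interior_subset (hy t ht)

theorem isPosInvariantRel_stayedIn (hφ : IsFlow φ) : IsPosInvariantRel φ (stayedIn φ U T) U := by
  intro x hx u hu hpath t ht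
  rw [hφ.map_map]
  rcases le_total 0 (u + t) with h | h
  · exact hpath _ ⟨h, by linarith [ht.2]⟩
  · exact hx _ ⟨by linarith [ht.1], h⟩

theorem disjoint_frontierFlowOut (hφ : IsFlow φ) (hSinv : IsInvariant (fun t x => φ (x, t)) S)
    (hSU : S ⊆ interior U) : Disjoint S (frontierFlowOut φ U T) := by
  rintro _ hS hE _ hz
  obtain ⟨⟨y, τ⟩, ⟨hy, -⟩, rfl⟩ := hE hz
  have : φ (φ (y, τ), -τ) ∈ S := hSinv (-τ) (hS hz)
  rw [hφ.map_map_neg] at this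
  exact hy.2 (hSU this)

theorem exitRegion_subset_frontierFlowOut (hφ : IsFlow φ) :
    exitRegion φ U T ⊆ frontierFlowOut φ U T :=
  fun y ⟨_, _, hs, hE, _⟩ => hφ.map_zero y ▸ hE 0 ⟨le_rfl, hs⟩

section
variable (hφ : IsFlow φ) (hU : IsClosed U) (hT : 0 ≤ T)
  (hTU : ∀ x, (∀ t ∈ Icc (-T) T, φ (x, t) ∈ U) → x ∈ interior U)
include hφ hU hT hTU

theorem map_mem_exitRegion {x : Γ} {u r : ℝ}
    (hpath : ∀ s ∈ Icc (0 : ℝ) u, φ (x, s) ∈ stayedIn φ U T) (hr : r ∈ Icc 0 u)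
    (hxr : φ (x, r) ∉ interior U) : φ (x, u) ∈ exitRegion φ U T := by
  have hrL := hpath r hr
  obtain ⟨w, hw, hwU⟩ : ∃ w ∈ Icc 0 T, φ (x, r + w) ∉ U := by
    by_contra! hin
    refine hxr (hTU _ fun t ht => ?_)
    rcases le_total 0 t with h | h
    · rw [hφ.map_map]
      exact hin t ⟨h, ht.2⟩
    · exact hrL t ⟨ht.1, h⟩
  have hu : u < r + w := by
    by_contra! hle
    exact hwU (stayedIn_subset hφ hT (hpath _ ⟨by linarith [hr.1, hw.1], hle⟩))
  refine ⟨hpath u ⟨hr.1.trans hr.2, le_rfl⟩, r + w - u, by linarith, fun h hh => ?_, ?_⟩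
  · refine ⟨(φ (x, r), u + h - r), ⟨?_, by linarith [hr.2, hh.1], by linarith [hh.2, hw.2]⟩, ?_⟩
    · exact hU.frontier_eq ▸ ⟨stayedIn_subset hφ hT hrL, hxr⟩
    · simp only [hφ.map_map]
      ring_nf
  · rw [hφ.map_map, add_sub_cancel]
    exact fun h => hwU (interior_subset h)

theorem isPosInvariantRel_exitRegion : IsPosInvariantRel φ (exitRegion φ U T) U := by
  rintro y ⟨hyL, s, hs, hE, hsU⟩ u hu hpath
  have hpathL := (isPosInvariantRel_stayedIn hφ).forall_mem_Icc hyL hpath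
  rcases le_total u s with h | h
  · refine ⟨hpathL u ⟨hu, le_rfl⟩, s - u, by linarith, fun v hv => ?_, ?_⟩
    · rw [hφ.map_map]
      exact hE _ ⟨by linarith [hv.1], by linarith [hv.2]⟩
    · rwa [hφ.map_map, add_sub_cancel]
  · exact map_mem_exitRegion hφ hU hT hTU hpathL ⟨hs, h⟩ hsU

theorem isExitSet_exitRegion : IsExitSet φ (exitRegion φ U T) (stayedIn φ U T) := by
  intro x hx t ht hout
  obtain ⟨q, hq, hqU⟩ : ∃ q ∈ Icc (0 : ℝ) t, φ (x, q) ∉ U := by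
    by_contra! hin
    exact hout (isPosInvariantRel_stayedIn hφ x hx t ht hin)
  obtain ⟨σ, hσ, hpath, hσU⟩ := (hφ.continuous_orbit x).exists_first_notMem_interior hU hq.1
    (by rw [hφ.map_zero]; exact stayedIn_subset hφ hT hx) (fun h => hqU (interior_subset h))
  exact ⟨σ, ⟨hσ.1, hσ.2.trans hq.2⟩, map_mem_exitRegion hφ hU hT hTU
    ((isPosInvariantRel_stayedIn hφ).forall_mem_Icc hx hpath) ⟨hσ.1, le_rfl⟩ hσU⟩

theorem isPosInvariantRel_closure {D : Set Γ} (hD : IsPosInvariantRel φ D U)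
    (hND : exitRegion φ U T ⊆ D) : IsPosInvariantRel φ (closure D) (stayedIn φ U T) := by
  intro x hx u hu hpath
  by_cases hint : ∃ r ∈ Icc (0 : ℝ) u, φ (x, r) ∉ interior U
  · obtain ⟨r, hr, hrU⟩ := hint
    exact subset_closure (hND (map_mem_exitRegion hφ hU hT hTU hpath hr hrU))
  · exact (hD.mono_right interior_subset).closure hφ isOpen_interior x hx u hu
      fun s hs => not_not.1 fun h => hint ⟨s, hs, h⟩

end

variable [T2Space Γ]

theorem isCompact_stayedIn (hφ : IsFlow φ) (hU : IsCompact U) (hT : 0 ≤ T) :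
    IsCompact (stayedIn φ U T) :=
  hU.of_isClosed_subset (hφ.isClosed_setOf_forall_mem hU.isClosed _) (stayedIn_subset hφ hT)

theorem isCompact_frontierFlowOut (hφ : IsFlow φ) (hU : IsCompact U) :
    IsCompact (frontierFlowOut φ U T) :=
  ((hU.of_isClosed_subset isClosed_frontier hU.isClosed.frontier_subset).prod
    isCompact_Icc).image hφ.1

theorem disjoint_closure_exitRegion (hφ : IsFlow φ) (hU : IsCompact U)
    (hSinv : IsInvariant (fun t x => φ (x, t)) S) (hSU : S ⊆ interior U) :
    Disjoint S (closure (exitRegion φ U T)) :=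
  (disjoint_frontierFlowOut hφ hSinv hSU).mono_right <| closure_minimal
    (exitRegion_subset_frontierFlowOut hφ) (isCompact_frontierFlowOut hφ hU).isClosed

theorem isIndexPair_stayedIn (hφ : IsFlow φ) (hU : IsCompact U) (hSU : S ⊆ interior U)
    (hmax : maxInv φ U = S) (hT : 0 ≤ T)
    (hTU : ∀ x, (∀ t ∈ Icc (-T) T, φ (x, t) ∈ U) → x ∈ interior U) :
    IsIndexPair φ S (stayedIn φ U T) (closure (exitRegion φ U T)) := by
  have hSinv : IsInvariant (fun t x => φ (x, t)) S := hmax ▸ hφ.isInvariant_maxInv U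
  have hS : IsCompact S :=
    hU.of_isClosed_subset (hmax ▸ hφ.isClosed_maxInv hU.isClosed) (hmax ▸ maxInv_subset U)
  have hL := isCompact_stayedIn hφ hU hT
  set L := stayedIn φ U T
  set N := closure (exitRegion φ U T)
  have hNL : N ⊆ L := closure_minimal (sep_subset _ _) hL.isClosed
  have hSLN : S ⊆ interior L ∩ Nᶜ := fun x hx =>
    ⟨subset_interior_stayedIn hφ hS hSinv hSU hx,
      (disjoint_closure_exitRegion hφ hU hSinv hSU).notMem_of_mem_left hx⟩
  have hLN : interior L ∩ Nᶜ ⊆ L \ N := fun x hx => ⟨interior_subset hx.1, hx.2⟩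
  refine .of_isPosInvariantRel hL (hL.of_isClosed_subset isClosed_closure hNL) hNL
    ⟨hL.of_isClosed_subset isClosed_closure (closure_minimal sdiff_subset hL.isClosed), ?_, ?_⟩
    (isPosInvariantRel_closure hφ hU.isClosed hT hTU
      (isPosInvariantRel_exitRegion hφ hU.isClosed hT hTU) subset_rfl)
    ((isExitSet_exitRegion hφ hU.isClosed hT hTU).mono_left subset_closure)
  · exact mem_nhdsSet_iff_exists.2 ⟨_, isOpen_interior.inter isClosed_closure.isOpen_compl, hSLN,
      hLN.trans subset_closure⟩
  · refine subset_antisymm ?_ (hSinv.subset_maxInv ((hSLN.trans hLN).trans subset_closure))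
    exact hmax ▸ maxInv_mono ((closure_minimal sdiff_subset hL.isClosed).trans
      (stayedIn_subset hφ hT))

end IndexPairConstruction

section FlowOut

variable {Γ : Type*} {φ : Γ × ℝ → Γ} {L P V R : Set Γ}

def flowOutWithin (φ : Γ × ℝ → Γ) (L P : Set Γ) : Set Γ :=
  {y | ∃ x ∈ P, ∃ t, 0 ≤ t ∧ (∀ s ∈ Icc (0 : ℝ) t, φ (x, s) ∈ L) ∧ φ (x, t) = y}

theorem flowOutWithin_subset : flowOutWithin φ L P ⊆ L :=
  fun _ ⟨_, _, t, ht, hpath, hy⟩ => hy ▸ hpath t ⟨ht, le_rfl⟩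

theorem flowOutWithin_mono {Q : Set Γ} (h : P ⊆ Q) : flowOutWithin φ L P ⊆ flowOutWithin φ L Q :=
  fun _ ⟨x, hx, hrest⟩ => ⟨x, h hx, hrest⟩

variable [TopologicalSpace Γ]

theorem inter_subset_flowOutWithin (hφ : IsFlow φ) : P ∩ L ⊆ flowOutWithin φ L P := by
  refine fun x hx => ⟨x, hx.1, 0, le_rfl, fun s hs => ?_, hφ.map_zero x⟩
  rw [le_antisymm hs.2 hs.1, hφ.map_zero]
  exact hx.2

theorem isPosInvariantRel_flowOutWithin (hφ : IsFlow φ) :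
    IsPosInvariantRel φ (flowOutWithin φ L P) L := by
  rintro _ ⟨x, hx, t, ht, hpath, rfl⟩ u hu hpath'
  refine ⟨x, hx, t + u, by linarith, fun s hs => ?_, (hφ.map_map x t u).symm⟩
  rcases le_total s t with h | h
  · exact hpath s ⟨hs.1, h⟩
  · simpa only [hφ.map_map, add_sub_cancel] using hpath' (s - t) ⟨by linarith, by linarith [hs.2]⟩

theorem exists_last_visit_of_mem_flowOutWithin (hφ : IsFlow φ) (hV : IsClosed V) (hPV : P ⊆ V)
    {y : Γ} (hy : y ∈ flowOutWithin φ L P) (hyV : y ∉ V) :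
    ∃ c ∈ V ∩ flowOutWithin φ L P, ∃ e, 0 ≤ e ∧ (∀ h ∈ Icc (0 : ℝ) e, φ (c, h) ∈ L) ∧
      (∀ h ∈ Ioc (0 : ℝ) e, φ (c, h) ∉ V) ∧ φ (c, e) = y := by
  obtain ⟨x, hx, t, ht, hpath, rfl⟩ := hy
  obtain ⟨σ, hσ, hσV, hafter⟩ := (hφ.continuous_orbit x).exists_last_mem hV ht
    (by rw [hφ.map_zero]; exact hPV hx)
  refine ⟨φ (x, σ), ⟨hσV, x, hx, σ, hσ.1, fun s hs => hpath s ⟨hs.1, hs.2.trans hσ.2⟩, rfl⟩,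
    t - σ, by linarith [hσ.2], fun h hh => ?_, fun h hh => ?_, ?_⟩
  · rw [hφ.map_map]
    exact hpath _ ⟨by linarith [hσ.1, hh.1], by linarith [hh.2]⟩
  · rw [hφ.map_map]
    exact hafter _ ⟨by linarith [hh.1], by linarith [hh.2]⟩
  · rw [hφ.map_map, add_sub_cancel]

variable [T2Space Γ]

theorem exists_mem_flowOutWithin_forall_Ioc_notMem (hφ : IsFlow φ) (hV : IsCompact V)
    (hPV : P ⊆ V) (hRinv : IsInvariant (fun t x => φ (x, t)) R) (hVR : Disjoint V R)
    (hmeet : (closure (flowOutWithin φ L P) ∩ R).Nonempty) (T : ℝ) :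
    ∃ c ∈ V ∩ flowOutWithin φ L P,
      (∀ h ∈ Icc (0 : ℝ) T, φ (c, h) ∈ L) ∧ ∀ h ∈ Ioc (0 : ℝ) T, φ (c, h) ∉ V := by
  obtain ⟨z, hzD, hzR⟩ := hmeet
  let Short := φ '' (V ×ˢ Icc 0 T)
  have hShort : IsCompact Short := (hV.prod isCompact_Icc).image hφ.1
  have hzShort : z ∉ Short := by
    rintro ⟨⟨v, e⟩, ⟨hv, -⟩, rfl⟩
    have : φ (φ (v, e), -e) ∈ R := hRinv (-e) hzR
    rw [hφ.map_map_neg] at this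
    exact hVR.notMem_of_mem_left hv this
  obtain ⟨y, hyO, hyD⟩ := mem_closure_iff.1 hzD (V ∪ Short)ᶜ
    (hV.isClosed.union hShort.isClosed).isOpen_compl
    (by rintro (h | h); exacts [hVR.notMem_of_mem_right hzR h, hzShort h])
  obtain ⟨c, hc, e, he, hpath, havoid, rfl⟩ :=
    exists_last_visit_of_mem_flowOutWithin hφ hV.isClosed hPV hyD fun h => hyO (Or.inl h)
  have hTe : T < e := by
    by_contra! h
    exact hyO (Or.inr ⟨(c, e), ⟨hc.1, he, h⟩, rfl⟩)
  exact ⟨c, hc, fun h hh => hpath h ⟨hh.1, hh.2.trans hTe.le⟩,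
    fun h hh => havoid h ⟨hh.1, hh.2.trans hTe.le⟩⟩

theorem exists_mem_nhdsSet_notMem_closure_flowOutWithin [LocallyCompactSpace Γ]
    (hφ : IsFlow φ) (hL : IsClosed L) {A W : Set Γ} (hA : IsCompact A)
    (hAinv : IsInvariant (fun t x => φ (x, t)) A) (hW : IsOpen W) (hAW : A ⊆ W) {x : Γ}
    (hxA : x ∉ A) {r : ℝ} (hr : 0 ≤ r) (hxr : φ (x, -r) ∉ L) :
    ∃ P ∈ 𝓝ˢ A, P ⊆ W ∧ x ∉ closure (flowOutWithin φ L P) := by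
  let K := (fun t => φ (x, t)) '' Icc (-r) 0
  have hK : IsCompact K := isCompact_Icc.image (hφ.continuous_orbit x)
  have hAK : A ⊆ Kᶜ := by
    rintro a ha ⟨t, -, rfl⟩
    have : φ (φ (x, t), -t) ∈ A := hAinv (-t) ha
    rw [hφ.map_map_neg] at this
    exact hxA this
  obtain ⟨P, hP, hAP, hPW⟩ :=
    exists_compact_between hA (hW.inter hK.isClosed.isOpen_compl) fun a ha => ⟨hAW ha, hAK ha⟩
  refine ⟨P, subset_interior_iff_mem_nhdsSet.1 hAP, fun y hy => (hPW hy).1, fun hx => ?_⟩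
  have hPc : ∀ᶠ y in 𝓝 x, ∀ t ∈ Icc (-r) 0, φ (y, t) ∈ Pᶜ :=
    hφ.eventually_nhds_forall_mem isCompact_Icc hP.isClosed.isOpen_compl
      fun t ht hP => (hPW hP).2 ⟨t, ht, rfl⟩
  have hLc : ∀ᶠ y in 𝓝 x, φ (y, -r) ∈ Lᶜ :=
    (hφ.continuous_fixed_time (-r)).continuousAt.preimage_mem_nhds (hL.isOpen_compl.mem_nhds hxr)
  obtain ⟨_, ⟨z, hz, t, ht, hpath, rfl⟩, hzP, hzL⟩ :=
    ((mem_closure_iff_frequently.1 hx).and_eventually (hPc.and hLc)).exists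
  rcases le_total r t with h | h
  · rw [hφ.map_map] at hzL
    exact hzL (hpath _ ⟨by linarith, by linarith⟩)
  · have := hzP (-t) ⟨by linarith, by linarith⟩
    rw [hφ.map_map_neg] at this
    exact this hz

theorem exists_mem_forall_mem_closure_flowOutWithin (hφ : IsFlow φ) {A : Set Γ}
    (hL : IsCompact L) (hV : IsCompact V) (hAV : V ∈ 𝓝ˢ A)
    (hRinv : IsInvariant (fun t x => φ (x, t)) R) (hVR : Disjoint V R)
    (hmeet : ∀ P ∈ 𝓝ˢ A, (closure (flowOutWithin φ L P) ∩ R).Nonempty) :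
    ∃ c ∈ V, (∀ P ∈ 𝓝ˢ A, P ⊆ V → c ∈ closure (flowOutWithin φ L P)) ∧
      (∀ t, 0 ≤ t → φ (c, t) ∈ L) ∧ ∀ t, 0 < t → φ (c, t) ∉ interior V := by
  let ι := {P : Set Γ // P ∈ 𝓝ˢ A ∧ P ⊆ V} × ℕ
  let C : ι → Set Γ := fun i => {c ∈ V ∩ flowOutWithin φ L i.1.1 |
    (∀ h ∈ Icc (0 : ℝ) i.2, φ (c, h) ∈ L) ∧ ∀ h ∈ Ioc (0 : ℝ) i.2, φ (c, h) ∉ V}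
  have hCV (i : ι) : closure (C i) ⊆ V := closure_minimal (fun _ hc => hc.1.1) hV.isClosed
  have hCmono {i j : ι} (hP : i.1.1 ⊆ j.1.1) (hT : j.2 ≤ i.2) : C i ⊆ C j :=
    fun c ⟨⟨hcV, hcD⟩, hcL, hcV'⟩ => ⟨⟨hcV, flowOutWithin_mono hP hcD⟩,
      fun h hh => hcL h ⟨hh.1, hh.2.trans (by exact_mod_cast hT)⟩,
      fun h hh => hcV' h ⟨hh.1, hh.2.trans (by exact_mod_cast hT)⟩⟩
  let V' : {P : Set Γ // P ∈ 𝓝ˢ A ∧ P ⊆ V} := ⟨V, hAV, le_rfl⟩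
  obtain ⟨c, hc⟩ := IsCompact.nonempty_iInter_of_directed_nonempty_isCompact_isClosed
    (ι := ι) (hι := ⟨(V', 0)⟩) (fun i => closure (C i))
    (fun i j => ⟨(⟨i.1.1 ∩ j.1.1, inter_mem i.1.2.1 j.1.2.1, inter_subset_left.trans i.1.2.2⟩,
      max i.2 j.2), closure_mono (hCmono inter_subset_left (le_max_left _ _)),
      closure_mono (hCmono inter_subset_right (le_max_right _ _))⟩)
    (fun i => by
      obtain ⟨c, hc, hcL, hcV⟩ := exists_mem_flowOutWithin_forall_Ioc_notMem hφ hV i.1.2.2 hRinv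
        hVR (hmeet _ i.1.2.1) i.2
      exact ⟨c, subset_closure ⟨hc, hcL, hcV⟩⟩)
    (fun i => hV.of_isClosed_subset isClosed_closure (hCV i)) (fun _ => isClosed_closure)
  rw [mem_iInter] at hc
  refine ⟨c, hCV (V', 0) (hc _), fun P hP hPV => ?_, fun t ht => ?_, fun t ht => ?_⟩
  · exact closure_mono (fun _ hc => hc.1.2) (hc (⟨P, hP, hPV⟩, 0))
  · exact closure_minimal (fun _ hc => hc.2.1 t ⟨ht, Nat.le_ceil t⟩)
      (hL.isClosed.preimage (hφ.continuous_fixed_time t)) (hc (V', ⌈t⌉₊))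
  · exact closure_minimal (fun _ hc h => hc.2.2 t ⟨ht, Nat.le_ceil t⟩ (interior_subset h))
      (isOpen_interior.isClosed_compl.preimage (hφ.continuous_fixed_time t)) (hc (V', ⌈t⌉₊))

theorem exists_mem_nhdsSet_disjoint_closure_flowOutWithin [LocallyCompactSpace Γ]
    (hφ : IsFlow φ) {S A : Set Γ} (hL : IsCompact L) (hLS : maxInv φ L ⊆ S) (hA : IsCompact A)
    (hAinv : IsInvariant (fun t x => φ (x, t)) A) (hR : IsClosed R)
    (hRinv : IsInvariant (fun t x => φ (x, t)) R) (hAR : Disjoint A R)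
    (hRA : compRepeller φ S A ⊆ R) :
    ∃ P ∈ 𝓝ˢ A, Disjoint (closure (flowOutWithin φ L P)) R := by
  obtain ⟨V, hV, hAV, hVR⟩ := exists_compact_between hA hR.isOpen_compl hAR.subset_compl_right
  rw [subset_compl_iff_disjoint_right] at hVR
  by_contra! hmeet
  obtain ⟨c, hcV, hcD, hcL, hcV'⟩ := exists_mem_forall_mem_closure_flowOutWithin hφ hL hV
    (subset_interior_iff_mem_nhdsSet.1 hAV) hRinv hVR
    fun P hP => not_disjoint_iff_nonempty_inter.1 (hmeet P hP)
  have hcA : c ∉ A := fun h => hcV' 1 one_pos (hAV (hAinv 1 h))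
  by_cases hback : ∀ r, 0 ≤ r → φ (c, -r) ∈ L
  · have hcS : c ∈ S := hLS ⟨hφ.map_zero c ▸ hcL 0 le_rfl, fun t => by
      rcases le_total 0 t with h | h
      exacts [hcL t h, neg_neg t ▸ hback (-t) (by linarith)]⟩
    have hω : omegaSet φ {c} ⊆ {c} ∪ (interior V)ᶜ := by
      refine omegaSet_subset_of_forall_mem (isClosed_singleton.union
        isOpen_interior.isClosed_compl) fun t ht => ?_
      rcases ht.eq_or_lt with h | h
      exacts [Or.inl (h ▸ hφ.map_zero c), Or.inr (hcV' t h)]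
    refine hVR.notMem_of_mem_left hcV (hRA ⟨hcS, subset_empty_iff.1 fun y hy => ?_⟩)
    rcases hω hy.1 with h | h
    exacts [hcA (h ▸ hy.2), h (hAV hy.2)]
  · push Not at hback
    obtain ⟨r, hr, hcr⟩ := hback
    obtain ⟨P, hP, hPV, hcP⟩ := exists_mem_nhdsSet_notMem_closure_flowOutWithin hφ hL.isClosed hA
      hAinv isOpen_interior hAV hcA hr hcr
    exact hcP (hcD P hP (hPV.trans interior_subset))

end FlowOut

section Triple

variable {Γ : Type*} [TopologicalSpace Γ] [T2Space Γ] {φ : Γ × ℝ → Γ} {S A R U P : Set Γ}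
  {T : ℝ}

theorem isIndexPair_closure_exitRegion_union_flowOutWithin (hφ : IsFlow φ) (hU : IsCompact U)
    (hSU : S ⊆ interior U) (hmax : maxInv φ U = S) (hT : 0 ≤ T)
    (hTU : ∀ x, (∀ t ∈ Icc (-T) T, φ (x, t) ∈ U) → x ∈ interior U)
    (hAinv : IsInvariant (fun t x => φ (x, t)) A) (hAS : A ⊆ S)
    (hRinv : IsInvariant (fun t x => φ (x, t)) R) (hRS : R ⊆ S)
    (hA : compAttractor φ S R ⊆ A) (hR : compRepeller φ S A ⊆ R) (hP : P ∈ 𝓝ˢ A)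
    (hPR : Disjoint (closure (flowOutWithin φ (stayedIn φ U T) P)) R) :
    IsIndexPair φ R (stayedIn φ U T)
        (closure (exitRegion φ U T ∪ flowOutWithin φ (stayedIn φ U T) P)) ∧
      IsIndexPair φ A (closure (exitRegion φ U T ∪ flowOutWithin φ (stayedIn φ U T) P))
        (closure (exitRegion φ U T)) := by
  have hLN := isIndexPair_stayedIn hφ hU hSU hmax hT hTU
  have hSN := disjoint_closure_exitRegion (T := T) hφ hU (hmax ▸ hφ.isInvariant_maxInv U) hSU
  have hL := isCompact_stayedIn hφ hU hT
  set L := stayedIn φ U T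
  set N₀ := exitRegion φ U T
  set D := flowOutWithin φ L P
  have hML : closure (N₀ ∪ D) ⊆ L :=
    closure_minimal (union_subset (sep_subset _ _) flowOutWithin_subset) hL.isClosed
  have hM := hL.of_isClosed_subset isClosed_closure hML
  have hNM : closure N₀ ⊆ closure (N₀ ∪ D) := closure_mono subset_union_left
  have hMpos := isPosInvariantRel_closure hφ hU.isClosed hT hTU
    ((isPosInvariantRel_exitRegion hφ hU.isClosed hT hTU).union
      ((isPosInvariantRel_flowOutWithin hφ).trans flowOutWithin_subset
        (isPosInvariantRel_stayedIn hφ))) (subset_union_left (t := D))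
  have hAM : A ⊆ interior (closure (N₀ ∪ D)) := by
    have hPL : A ⊆ interior (P ∩ L) := fun a ha => by
      rw [interior_inter]
      exact ⟨subset_interior_iff_mem_nhdsSet.2 hP ha, hLN.subset_interior (hAS ha)⟩
    exact hPL.trans (interior_mono
      ((inter_subset_flowOutWithin hφ).trans (subset_union_right.trans subset_closure)))
  have hRM : Disjoint R (closure (N₀ ∪ D)) := by
    rw [closure_union]
    exact disjoint_union_right.2 ⟨hSN.mono_left hRS, hPR.symm⟩
  exact ⟨hLN.isIndexPair_repeller hM hNM hML hMpos hRinv hRS hRM hAM hR,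
    hLN.isIndexPair_attractor hM hNM hML hMpos hAinv hAM (hSN.mono_left hAS) hRM hA⟩

end Triple

/-- **Existence of index triples**: for any attractor-repeller pair `(A, R)` in an isolated
invariant set `S` there exist compact sets `N ⊆ M ⊆ L` such that `(L, M)` is an index pair
for `R`, `(L, N)` is an index pair for `S`, and `(M, N)` is an index pair for `A`. -/
theorem exists_index_triple
    {Γ : Type*} [TopologicalSpace Γ] [LocallyCompactSpace Γ] [T2Space Γ]
    (φ : Γ × ℝ → Γ) (hφ : IsFlow φ) (S : Set Γ) (hS : IsIsolatedInvariantSet φ S)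
    (A R : Set Γ) (hAR : IsAttractorRepellerPair φ S A R) :
    ∃ L M N : Set Γ, N ⊆ M ∧ M ⊆ L ∧
      IsIndexPair φ R L M ∧ IsIndexPair φ S L N ∧ IsIndexPair φ A M N := by
  obtain ⟨hScomp, U, hU, hUS, hmax⟩ := hS
  have hSU : S ⊆ interior U := subset_interior_iff_mem_nhdsSet.2 hUS
  obtain ⟨T, hT, hTU⟩ := hφ.exists_forall_Icc_mem_imp_mem hU isOpen_interior (hmax ▸ hSU)
  have hdisj := hAR.disjoint hφ hScomp
  obtain ⟨hA, hR, hAeq, hReq⟩ := hAR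
  obtain ⟨P, hP, hPR⟩ := exists_mem_nhdsSet_disjoint_closure_flowOutWithin hφ
    (isCompact_stayedIn hφ hU hT) (hmax ▸ maxInv_mono (stayedIn_subset hφ hT))
    (hA.isCompact hφ hScomp) (hA.isInvariant hφ) (hR.isCompact hφ hScomp).isClosed
    (hR.isInvariant hφ) hdisj hReq.superset
  obtain ⟨hRpair, hApair⟩ := isIndexPair_closure_exitRegion_union_flowOutWithin hφ hU hSU hmax
    hT hTU (hA.isInvariant hφ) hA.1 (hR.isInvariant hφ) hR.1 hAeq.superset hReq.superset hP hPR
  exact ⟨_, _, _, hApair.2.2.1, hRpair.2.2.1, hRpair, isIndexPair_stayedIn hφ hU hSU hmax hT hTU,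
    hApair⟩
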